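/- Let β > 0 and s ∈ ℝ with |s| ≥ ε > 0, and set a = √(|s|/(2β)). Then Re p₁(is) + Re p₂(is) ≥ c_ε(1 + |s|^{1/2}) for some constant c_ε > 0 depending only on β and ε; equivalently, βa·[(cosh a − cos a)(sinh a − sin a)]/(sinh²a + sin²a) ≥ c_ε(1 + √(2β)·a). -/

import Mathlib

open Complex

noncomputable def p1 (β : ℝ) (z : ℂ) : ℂ :=
  (z * (β : ℂ)) ^ ((1:ℂ)/2) / Complex.tanh ((z / (β : ℂ)) ^ ((1:ℂ)/2))

noncomputable def p2 (β : ℝ) (z : ℂ) : ℂ :=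
  -((z * (β : ℂ)) ^ ((1:ℂ)/2)) / Complex.sinh ((z / (β : ℂ)) ^ ((1:ℂ)/2))

/-!
On the imaginary axis the principal square roots give `(isβ)^{1/2} = β u` and
`(is/β)^{1/2} = u` with `u = a (1 + i)`, `a = √(s / (2β))` for `s > 0`, so
`p₁ + p₂ = β u (cosh u - 1) / sinh u`. Expanding `cosh` and `sinh` at `a + a i` turns its real
part into `β a` times `(cosh a - cos a)(sinh a - sin a) / (sinh² a + sin² a)`; negative `s`
reduce to positive ones by complex conjugation. That ratio is positive and continuous for
`a > 0` and at least `1/8` once `sinh a ≥ 2`, so it is bounded below by some `m > 0` on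
`[a₀, ∞)`, and there `β a m` dominates a multiple of `1 + √(2β) a`.
-/

namespace Real

lemma cosh_sub_cos_pos {x : ℝ} (hx : x ≠ 0) : 0 < cosh x - cos x := by
  linarith [one_lt_cosh.2 hx, cos_le_one x]

lemma sinh_sub_sin_pos {x : ℝ} (hx : 0 < x) : 0 < sinh x - sin x := by
  linarith [sin_lt hx, self_lt_sinh_iff.2 hx]

end Real

noncomputable def edgeRatio (a : ℝ) : ℝ :=
  (Real.cosh a - Real.cos a) * (Real.sinh a - Real.sin a) / (Real.sinh a ^ 2 + Real.sin a ^ 2)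

section EdgeRatio

open Real Set

lemma edgeRatio_pos {a : ℝ} (ha : 0 < a) : 0 < edgeRatio a := by
  have : 0 < Real.sinh a := sinh_pos_iff.2 ha
  exact div_pos (mul_pos (cosh_sub_cos_pos ha.ne') (sinh_sub_sin_pos ha)) (by positivity)

lemma continuousOn_edgeRatio : ContinuousOn edgeRatio (Ioi 0) := by
  refine ContinuousOn.div (by fun_prop) (by fun_prop) fun a ha ↦ ?_
  have : 0 < Real.sinh a := sinh_pos_iff.2 ha
  positivity

lemma one_div_eight_le_edgeRatio {a : ℝ} (ha : 2 ≤ Real.sinh a) : 1 / 8 ≤ edgeRatio a := by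
  have hcosh : Real.sinh a / 2 ≤ Real.cosh a - Real.cos a := by
    linarith [sinh_lt_cosh a, cos_le_one a]
  have hsinh : Real.sinh a / 2 ≤ Real.sinh a - Real.sin a := by linarith [sin_le_one a]
  have hden : Real.sinh a ^ 2 + Real.sin a ^ 2 ≤ 2 * Real.sinh a ^ 2 := by
    nlinarith [sin_sq_le_one a]
  rw [edgeRatio, le_div_iff₀ (by positivity)]
  calc 1 / 8 * (Real.sinh a ^ 2 + Real.sin a ^ 2)
      ≤ Real.sinh a / 2 * (Real.sinh a / 2) := by linarith
    _ ≤ (Real.cosh a - Real.cos a) * (Real.sinh a - Real.sin a) := by gcongr; linarith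

lemma exists_pos_le_edgeRatio {a₀ : ℝ} (ha₀ : 0 < a₀) :
    ∃ m > 0, ∀ a, a₀ ≤ a → m ≤ edgeRatio a := by
  obtain ⟨m, hm, hm_le⟩ := isCompact_Icc.exists_forall_le'
    (continuousOn_edgeRatio.mono fun a ha ↦ ha₀.trans_le ha.1)
    fun a ha ↦ edgeRatio_pos (ha₀.trans_le ha.1)
  refine ⟨min m (1 / 8), by positivity, fun a ha ↦ ?_⟩
  rcases le_or_gt a 2 with h2 | h2
  · exact (min_le_left _ _).trans (hm_le a ⟨ha, h2⟩)
  · exact (min_le_right _ _).trans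
      (one_div_eight_le_edgeRatio (by linarith [self_lt_sinh_iff.2 (zero_lt_two.trans h2)]))

lemma exists_mul_one_add_le_mul_edgeRatio {β a₀ b : ℝ} (hβ : 0 < β) (ha₀ : 0 < a₀)
    (hb : 0 ≤ b) : ∃ c > 0, ∀ a, a₀ ≤ a → c * (1 + b * a) ≤ β * a * edgeRatio a := by
  obtain ⟨m, hm, hm_le⟩ := exists_pos_le_edgeRatio ha₀
  refine ⟨β * m / (a₀⁻¹ + b), by positivity, fun a ha ↦ ?_⟩
  have ha_pos : 0 < a := ha₀.trans_le ha
  have h1 : 1 ≤ a₀⁻¹ * a := by rwa [inv_mul_eq_div, one_le_div ha₀]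
  calc β * m / (a₀⁻¹ + b) * (1 + b * a)
      ≤ β * m / (a₀⁻¹ + b) * ((a₀⁻¹ + b) * a) := by gcongr; linarith
    _ = β * a * m := by field_simp
    _ ≤ β * a * edgeRatio a := by gcongr; exact hm_le a ha

end EdgeRatio

section ImaginaryAxis

open ComplexConjugate

lemma cpow_one_div_two_I_mul_ofReal {r : ℝ} (hr : 0 < r) :
    (I * r) ^ ((1 : ℂ) / 2) = (√(r / 2) : ℂ) * (1 + I) := by
  have hsq : ((√(r / 2) : ℂ) * (1 + I)) ^ 2 = I * r := by
    rw [mul_pow, ← ofReal_pow, Real.sq_sqrt (by positivity), add_sq, I_sq]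
    push_cast; ring
  have hre : 0 < ((√(r / 2) : ℂ) * (1 + I)).re := by
    simpa using Real.sqrt_pos.2 (half_pos hr)
  rw [one_div, ← hsq, sq_cpow_two_inv hre]

lemma sinh_ofReal_mul_one_add_I (a : ℝ) :
    sinh (a * (1 + I))
      = (Real.sinh a * Real.cos a : ℝ) + (Real.cosh a * Real.sin a : ℝ) * I := by
  rw [mul_one_add, sinh_add, sinh_mul_I, cosh_mul_I]
  push_cast; ring

lemma cosh_ofReal_mul_one_add_I (a : ℝ) :
    cosh (a * (1 + I))
      = (Real.cosh a * Real.cos a : ℝ) + (Real.sinh a * Real.sin a : ℝ) * I := by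
  rw [mul_one_add, cosh_add, sinh_mul_I, cosh_mul_I]
  push_cast; ring

lemma re_mul_cosh_sub_one_div_sinh (a : ℝ) :
    (a * (1 + I) * (cosh (a * (1 + I)) - 1) / sinh (a * (1 + I))).re = a * edgeRatio a := by
  have hnormSq : normSq (sinh (a * (1 + I))) = Real.sinh a ^ 2 + Real.sin a ^ 2 := by
    rw [sinh_ofReal_mul_one_add_I, normSq_add_mul_I]
    linear_combination
      Real.sinh a ^ 2 * Real.sin_sq_add_cos_sq a + Real.sin a ^ 2 * Real.cosh_sq a
  rw [div_re, hnormSq, ← add_div, edgeRatio, mul_div_assoc']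
  congr 1
  rw [cosh_ofReal_mul_one_add_I, sinh_ofReal_mul_one_add_I]
  simp only [mul_re, mul_im, add_re, add_im, sub_re, sub_im, one_re, one_im, I_re, I_im,
    ofReal_re, ofReal_im]
  linear_combination (a * Real.sinh a * Real.cosh a) * Real.sin_sq_add_cos_sq a
    + (a * Real.sin a * Real.cos a) * Real.cosh_sq a

lemma p1_add_p2_I_mul {β t : ℝ} (hβ : 0 < β) (ht : 0 < t) :
    p1 β (I * t) + p2 β (I * t)
      = β * ((√(t / (2 * β)) : ℂ) * (1 + I) * (cosh ((√(t / (2 * β)) : ℂ) * (1 + I)) - 1)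
          / sinh ((√(t / (2 * β)) : ℂ) * (1 + I))) := by
  have hmul : (I * t * β) ^ ((1 : ℂ) / 2) = β * ((√(t / (2 * β)) : ℂ) * (1 + I)) := by
    have hsqrt : √(t * β / 2) = β * √(t / (2 * β)) := by
      rw [show t * β / 2 = β ^ 2 * (t / (2 * β)) by field_simp, Real.sqrt_mul (by positivity),
        Real.sqrt_sq hβ.le]
    rw [mul_assoc, ← ofReal_mul, cpow_one_div_two_I_mul_ofReal (by positivity), hsqrt]
    push_cast; ring
  have hdiv : (I * t / β) ^ ((1 : ℂ) / 2) = (√(t / (2 * β)) : ℂ) * (1 + I) := by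
    rw [mul_div_assoc, ← ofReal_div, cpow_one_div_two_I_mul_ofReal (by positivity), div_div,
      mul_comm β]
  rw [p1, p2, hmul, hdiv, tanh_eq_sinh_div_cosh, div_div_eq_mul_div]
  ring

lemma re_p1_add_re_p2_I_mul {β t : ℝ} (hβ : 0 < β) (ht : 0 < t) :
    (p1 β (I * t)).re + (p2 β (I * t)).re
      = β * √(t / (2 * β)) * edgeRatio √(t / (2 * β)) := by
  rw [← add_re, p1_add_p2_I_mul hβ ht, re_ofReal_mul, re_mul_cosh_sub_one_div_sinh, mul_assoc]

lemma conj_cpow_one_div_two {x : ℂ} (hx : x.arg ≠ Real.pi) :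
    conj x ^ ((1 : ℂ) / 2) = conj (x ^ ((1 : ℂ) / 2)) := by
  rw [conj_cpow _ _ hx, map_div₀, map_one, map_ofNat]

lemma cpow_one_div_two_conj_mul_ofReal {β : ℝ} {z : ℂ} (hβ : 0 < β)
    (hz : z.arg ≠ Real.pi) :
    (conj z * β) ^ ((1 : ℂ) / 2) = conj ((z * β) ^ ((1 : ℂ) / 2)) := by
  rw [← conj_cpow_one_div_two (by rwa [arg_mul_real hβ]), map_mul, conj_ofReal]

lemma cpow_one_div_two_conj_div_ofReal {β : ℝ} {z : ℂ} (hβ : 0 < β)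
    (hz : z.arg ≠ Real.pi) :
    (conj z / β) ^ ((1 : ℂ) / 2) = conj ((z / β) ^ ((1 : ℂ) / 2)) := by
  have harg : (z / β).arg ≠ Real.pi := by
    rwa [div_eq_mul_inv, ← ofReal_inv, arg_mul_real (inv_pos.2 hβ)]
  rw [← conj_cpow_one_div_two harg, map_div₀, conj_ofReal]

lemma p1_conj {β : ℝ} {z : ℂ} (hβ : 0 < β) (hz : z.arg ≠ Real.pi) :
    p1 β (conj z) = conj (p1 β z) := by
  rw [p1, p1, cpow_one_div_two_conj_mul_ofReal hβ hz, cpow_one_div_two_conj_div_ofReal hβ hz,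
    tanh_conj, ← map_div₀]

lemma p2_conj {β : ℝ} {z : ℂ} (hβ : 0 < β) (hz : z.arg ≠ Real.pi) :
    p2 β (conj z) = conj (p2 β z) := by
  rw [p2, p2, cpow_one_div_two_conj_mul_ofReal hβ hz, cpow_one_div_two_conj_div_ofReal hβ hz,
    sinh_conj, ← map_neg, ← map_div₀]

lemma re_p1_add_re_p2_I_mul_abs {β : ℝ} (hβ : 0 < β) (s : ℝ) :
    (p1 β (I * s)).re + (p2 β (I * s)).re = (p1 β (I * |s|)).re + (p2 β (I * |s|)).re := by
  rcases le_or_gt 0 s with hs | hs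
  · rw [abs_of_nonneg hs]
  · have harg : (I * |s|).arg ≠ Real.pi := by
      rw [mul_comm, arg_real_mul I (abs_pos.2 hs.ne), arg_I]
      linarith [Real.pi_pos]
    have hconj : I * s = conj (I * |s|) := by
      rw [abs_of_neg hs]; simp
    rw [hconj, p1_conj hβ harg, p2_conj hβ harg, conj_re, conj_re]

end ImaginaryAxis

/-- for |s| ≥ ε > 0 and a = √(|s|/(2β)),
Re p₁(is) + Re p₂(is) ≥ c_ε(1 + |s|^{1/2}); equivalently
βa(cosh a − cos a)(sinh a − sin a)/(sinh²a + sin²a) ≥ c_ε(1 + √(2β)·a). -/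
theorem re_p1_add_re_p2_lower_bound (β ε : ℝ) (hβ : 0 < β) (hε : 0 < ε) :
    ∃ c > (0:ℝ), ∀ s : ℝ, ε ≤ |s| →
      c * (1 + Real.sqrt |s|)
          ≤ (p1 β (Complex.I * (s : ℂ))).re + (p2 β (Complex.I * (s : ℂ))).re
        ∧ c * (1 + Real.sqrt (2 * β) * Real.sqrt (|s| / (2 * β)))
          ≤ β * Real.sqrt (|s| / (2 * β))
              * ((Real.cosh (Real.sqrt (|s| / (2 * β))) - Real.cos (Real.sqrt (|s| / (2 * β))))
                  * (Real.sinh (Real.sqrt (|s| / (2 * β))) - Real.sin (Real.sqrt (|s| / (2 * β)))))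
              / (Real.sinh (Real.sqrt (|s| / (2 * β))) ^ 2
                  + Real.sin (Real.sqrt (|s| / (2 * β))) ^ 2) := by
  obtain ⟨c, hc, hbound⟩ := exists_mul_one_add_le_mul_edgeRatio hβ
    (Real.sqrt_pos.2 (by positivity : 0 < ε / (2 * β))) (Real.sqrt_nonneg (2 * β))
  refine ⟨c, hc, fun s hs ↦ ?_⟩
  have hs_pos : 0 < |s| := hε.trans_le hs
  have hle := hbound √(|s| / (2 * β)) (Real.sqrt_le_sqrt (by gcongr))
  have hsqrt : √(2 * β) * √(|s| / (2 * β)) = √|s| := by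
    rw [← Real.sqrt_mul (by positivity), mul_div_cancel₀ _ (by positivity)]
  rw [mul_div_assoc]
  refine ⟨?_, hle⟩
  rwa [re_p1_add_re_p2_I_mul_abs hβ, re_p1_add_re_p2_I_mul hβ hs_pos, ← hsqrt]
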